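/- arXiv:1902.08380 — 5 statements merged into one kernel-verified Lean document; each statement's English description precedes it below -/
import Mathlib

section
/- Let D, D' be real d×d matrices with unit-norm columns, D invertible, and suppose ⟨D_j, D'_j⟩ ≥ 0 for every column index j. With Λ(D,D') the diagonal matrix having entries -½‖D_j - D'_j‖₂², the matrix A = D⁻¹D' - I - Λ(D,D') satisfies ‖D - D'‖_F / (√2 · ‖D‖₂) ≤ ‖A‖_F ≤ ‖D⁻¹‖₂ · ‖D - D'‖_F, where ‖·‖₂ is the spectral norm. -/
/-!
Write `c_j = ⟪D_j, D'_j⟫ ∈ [0, 1]`. For unit columns `‖D_j - D'_j‖² = 2 - 2 c_j`, so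
`1 + Λ = diag c` and `D A = D' - D diag c`, whose `j`-th column `D'_j - c_j D_j` has squared norm
`1 - c_j²`. As `1 - c ≤ 1 - c² ≤ 2 - 2c` for `c ∈ [0, 1]`, i.e.
`½‖D_j - D'_j‖² ≤ ‖(D A)_j‖² ≤ ‖D_j - D'_j‖²`, the Frobenius norms of `D A` and `D - D'`
agree up to a factor `√2`. Both bounds then follow from `‖X M‖_F ≤ ‖X‖₂ ‖M‖_F`, applied to
`D A` and to `A = D⁻¹ (D A)`.
-/

open Matrix Finset

/-- Frobenius norm of a real matrix. -/
noncomputable def frob {d : ℕ} (X : Matrix (Fin d) (Fin d) ℝ) : ℝ :=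
  Real.sqrt (∑ i, ∑ j, (X i j) ^ 2)

/-- Spectral (ℓ₂ operator) norm of a real matrix. -/
noncomputable def specNorm {d : ℕ} (X : Matrix (Fin d) (Fin d) ℝ) : ℝ :=
  ‖Matrix.toEuclideanCLM (𝕜 := ℝ) X‖

section UnitVectors

variable {E : Type*} [NormedAddCommGroup E] [InnerProductSpace ℝ E] {u v : E}

lemma norm_sub_sq_eq_two_sub_two_inner (hu : ‖u‖ = 1) (hv : ‖v‖ = 1) :
    ‖u - v‖ ^ 2 = 2 - 2 * inner ℝ u v := by
  rw [norm_sub_sq_real, hu, hv]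
  ring

lemma norm_sub_inner_smul_sq (hu : ‖u‖ = 1) :
    ‖v - inner ℝ u v • u‖ ^ 2 = ‖v‖ ^ 2 - inner ℝ u v ^ 2 := by
  rw [norm_sub_sq_real, inner_smul_right, real_inner_comm, norm_smul, hu, Real.norm_eq_abs,
    mul_one, sq_abs]
  ring

lemma inner_le_one_of_norm_eq_one (hu : ‖u‖ = 1) (hv : ‖v‖ = 1) : inner ℝ u v ≤ 1 := by
  simpa [hu, hv] using real_inner_le_norm u v

/-- With `c = ⟪u, v⟫`, this is `1 - c² ≤ 2 - 2c`, i.e. `(1 - c)² ≥ 0`. -/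
lemma norm_sub_inner_smul_le_norm_sub (hu : ‖u‖ = 1) (hv : ‖v‖ = 1) :
    ‖v - inner ℝ u v • u‖ ≤ ‖u - v‖ := by
  rw [← pow_le_pow_iff_left₀ (norm_nonneg _) (norm_nonneg _) two_ne_zero,
    norm_sub_inner_smul_sq hu, norm_sub_sq_eq_two_sub_two_inner hu hv, hv]
  nlinarith [sq_nonneg (1 - inner ℝ u v)]

/-- For `c = ⟪u, v⟫ ∈ [0, 1]` this is `1 - c ≤ (1 - c)(1 + c)`. -/
lemma norm_sub_le_sqrt_two_mul_norm_sub_inner_smul (hu : ‖u‖ = 1) (hv : ‖v‖ = 1)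
    (hinner : 0 ≤ inner ℝ u v) :
    ‖u - v‖ ≤ Real.sqrt 2 * ‖v - inner ℝ u v • u‖ := by
  rw [← pow_le_pow_iff_left₀ (norm_nonneg _) (by positivity) two_ne_zero, mul_pow,
    Real.sq_sqrt zero_le_two, norm_sub_inner_smul_sq hu, norm_sub_sq_eq_two_sub_two_inner hu hv, hv]
  nlinarith [inner_le_one_of_norm_eq_one hu hv]

end UnitVectors

section Columns

variable {d : ℕ}

def colEuc (X : Matrix (Fin d) (Fin d) ℝ) (j : Fin d) : EuclideanSpace ℝ (Fin d) :=
  WithLp.toLp 2 (Xᵀ j)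

lemma norm_colEuc_sq (X : Matrix (Fin d) (Fin d) ℝ) (j : Fin d) :
    ‖colEuc X j‖ ^ 2 = ∑ i, X i j ^ 2 := by
  simp [colEuc, EuclideanSpace.norm_sq_eq]

lemma norm_colEuc_eq_one {X : Matrix (Fin d) (Fin d) ℝ} {j : Fin d}
    (h : ∑ i, X i j ^ 2 = 1) : ‖colEuc X j‖ = 1 := by
  rw [← pow_eq_one_iff_of_nonneg (norm_nonneg _) two_ne_zero, norm_colEuc_sq, h]

lemma inner_colEuc (X Y : Matrix (Fin d) (Fin d) ℝ) (j : Fin d) :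
    inner ℝ (colEuc X j) (colEuc Y j) = ∑ i, X i j * Y i j := by
  simp [colEuc, PiLp.inner_apply, mul_comm]

lemma colEuc_sub (X Y : Matrix (Fin d) (Fin d) ℝ) (j : Fin d) :
    colEuc (X - Y) j = colEuc X j - colEuc Y j := rfl

lemma colEuc_mul_diagonal (X : Matrix (Fin d) (Fin d) ℝ) (c : Fin d → ℝ) (j : Fin d) :
    colEuc (X * diagonal c) j = c j • colEuc X j := by
  ext i
  simp [colEuc, mul_comm]

lemma colEuc_mul (X M : Matrix (Fin d) (Fin d) ℝ) (j : Fin d) :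
    colEuc (X * M) j = Matrix.toEuclideanCLM (𝕜 := ℝ) X (colEuc M j) := by
  ext i
  simp [colEuc, Matrix.toEuclideanCLM_toLp, mulVec, dotProduct, mul_apply, mul_comm]

lemma frob_nonneg (X : Matrix (Fin d) (Fin d) ℝ) : 0 ≤ frob X := Real.sqrt_nonneg _

lemma frob_sq (X : Matrix (Fin d) (Fin d) ℝ) : frob X ^ 2 = ∑ j, ‖colEuc X j‖ ^ 2 := by
  rw [frob, Real.sq_sqrt (by positivity), Finset.sum_comm]
  simp only [norm_colEuc_sq]

lemma frob_le_mul_frob_of_norm_colEuc_le {X Y : Matrix (Fin d) (Fin d) ℝ} {c : ℝ} (hc : 0 ≤ c)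
    (h : ∀ j, ‖colEuc X j‖ ≤ c * ‖colEuc Y j‖) : frob X ≤ c * frob Y := by
  rw [← pow_le_pow_iff_left₀ (frob_nonneg _) (mul_nonneg hc (frob_nonneg _))
    two_ne_zero, mul_pow, frob_sq, frob_sq, Finset.mul_sum]
  gcongr with j
  rw [← mul_pow]
  exact pow_le_pow_left₀ (norm_nonneg _) (h j) 2

lemma frob_mul_le (X M : Matrix (Fin d) (Fin d) ℝ) : frob (X * M) ≤ specNorm X * frob M :=
  frob_le_mul_frob_of_norm_colEuc_le (norm_nonneg _) fun j => by
    rw [colEuc_mul]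
    exact ContinuousLinearMap.le_opNorm _ _

end Columns

theorem stmt3 (d : ℕ) (D D' : Matrix (Fin d) (Fin d) ℝ)
    (hD : ∀ j, ∑ i, (D i j) ^ 2 = 1) (hD' : ∀ j, ∑ i, (D' i j) ^ 2 = 1)
    (hDinv : IsUnit D)
    (hpos : ∀ j, 0 ≤ ∑ i, D i j * D' i j)
    (Λ : Matrix (Fin d) (Fin d) ℝ)
    (hΛ : Λ = Matrix.diagonal (fun j => -(1 / 2) * ∑ i, (D i j - D' i j) ^ 2))
    (A : Matrix (Fin d) (Fin d) ℝ)
    (hA : A = D⁻¹ * D' - 1 - Λ) :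
    frob (D - D') / (Real.sqrt 2 * specNorm D) ≤ frob A ∧
    frob A ≤ specNorm D⁻¹ * frob (D - D') := by
  have hu : ∀ j, ‖colEuc D j‖ = 1 := fun j => norm_colEuc_eq_one (hD j)
  have hv : ∀ j, ‖colEuc D' j‖ = 1 := fun j => norm_colEuc_eq_one (hD' j)
  have hinner : ∀ j, 0 ≤ inner ℝ (colEuc D j) (colEuc D' j) := fun j => by
    rw [inner_colEuc]; exact hpos j
  have hdist : ∀ j, ∑ i, (D i j - D' i j) ^ 2 = 2 - 2 * inner ℝ (colEuc D j) (colEuc D' j) :=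
    fun j => by
      rw [← norm_sub_sq_eq_two_sub_two_inner (hu j) (hv j), ← colEuc_sub, norm_colEuc_sq]
      rfl
  have hΛ_add_one : 1 + Λ = diagonal fun j => inner ℝ (colEuc D j) (colEuc D' j) := by
    rw [hΛ, ← diagonal_one, diagonal_add]
    congr 1; funext j
    rw [hdist j]
    ring
  have hdet : IsUnit D.det := (isUnit_iff_isUnit_det D).mp hDinv
  have hDA : D * A = D' - D * (1 + Λ) := by
    rw [hA, Matrix.mul_sub, Matrix.mul_sub, ← Matrix.mul_assoc, mul_nonsing_inv D hdet, one_mul,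
      Matrix.mul_add, sub_sub]
  have hcol : ∀ j, colEuc (D * A) j =
      colEuc D' j - inner ℝ (colEuc D j) (colEuc D' j) • colEuc D j := fun j => by
    rw [hDA, hΛ_add_one, colEuc_sub, colEuc_mul_diagonal]
  have hDA_le : frob (D * A) ≤ frob (D - D') := by
    simpa only [one_mul] using frob_le_mul_frob_of_norm_colEuc_le (X := D * A) (Y := D - D')
      zero_le_one fun j => by
        rw [hcol, colEuc_sub, one_mul]
        exact norm_sub_inner_smul_le_norm_sub (hu j) (hv j)
  have hsub_le : frob (D - D') ≤ Real.sqrt 2 * frob (D * A) :=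
    frob_le_mul_frob_of_norm_colEuc_le (Real.sqrt_nonneg 2) fun j => by
      rw [hcol, colEuc_sub]
      exact norm_sub_le_sqrt_two_mul_norm_sub_inner_smul (hu j) (hv j) (hinner j)
  constructor
  · refine div_le_of_le_mul₀ (mul_nonneg (Real.sqrt_nonneg 2) (norm_nonneg _)) (frob_nonneg A) ?_
    calc frob (D - D') ≤ Real.sqrt 2 * frob (D * A) := hsub_le
      _ ≤ Real.sqrt 2 * (specNorm D * frob A) := by gcongr; exact frob_mul_le D A
      _ = frob A * (Real.sqrt 2 * specNorm D) := by ring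
  · calc frob A = frob (D⁻¹ * (D * A)) := by
          rw [← Matrix.mul_assoc, nonsing_inv_mul D hdet, one_mul]
      _ ≤ specNorm D⁻¹ * frob (D * A) := frob_mul_le _ _
      _ ≤ specNorm D⁻¹ * frob (D - D') := mul_le_mul_of_nonneg_left hDA_le (norm_nonneg _)
end

section
/- Let D ∈ ℝ^{d×d} be an invertible matrix with unit-norm columns, fix a column index k, and let w ∈ ℝ^d with w_k = 1. Define M = DᵀD and the matrix Q whose k-th row is wᵀD⁻¹ and whose h-th row (h ≠ k) is √((w_h - M_{k,h})² + 1 - M_{k,h}²) times the h-th row of D⁻¹. If Q is invertible, then every column of Q⁻¹ has unit Euclidean norm. -/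
/-!
Write `Q = A D⁻¹`, where `A` is the diagonal matrix `diag (c_h)` with its `k`-th row replaced by
`wᵀ`. Since `w_k = 1`, the columns of `A⁻¹` are `e_k` and `c_j⁻¹ (e_j - w_j e_k)` for `j ≠ k`, so
the columns of `Q⁻¹ = D A⁻¹` are `d_k` and `c_j⁻¹ (d_j - w_j d_k)`, where `d_j` are the columns of
`D`. For unit vectors, `‖d_j - t d_k‖² = (t - ⟪d_k, d_j⟫)² + 1 - ⟪d_k, d_j⟫²`, which is exactly
`c_j²` when `t = w_j`; and `c_j ≠ 0` because otherwise the `j`-th row of `Q` vanishes.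
-/

open Matrix Finset

namespace Matrix

variable {n : Type*}

theorem sum_sq_col_sub_smul_col {m : Type*} [Fintype m] {D : Matrix m n ℝ} {j k : n}
    (hj : ∑ i, D i j ^ 2 = 1) (hk : ∑ i, D i k ^ 2 = 1) (t : ℝ) :
    ∑ i, (D i j - t * D i k) ^ 2 = (t - (Dᵀ * D) k j) ^ 2 + 1 - (Dᵀ * D) k j ^ 2 := by
  have hexpand : ∀ i, (D i j - t * D i k) ^ 2
      = D i j ^ 2 - 2 * t * (D i k * D i j) + t ^ 2 * D i k ^ 2 := fun i => by ring
  simp only [hexpand, sum_add_distrib, sum_sub_distrib, ← mul_sum, hj, hk, mul_apply,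
    transpose_apply]
  ring

variable [Fintype n] [DecidableEq n]

theorem inv_apply_eq_of_mulVec_eq_single {R : Type*} [CommRing R] {Q : Matrix n n R}
    (hQ : IsUnit Q) {v : n → R} {j : n} (h : Q *ᵥ v = Pi.single j 1) (i : n) :
    Q⁻¹ i j = v i := by
  have hv : Q⁻¹ *ᵥ (Q *ᵥ v) = v := by
    rw [mulVec_mulVec, nonsing_inv_mul _ ((isUnit_iff_isUnit_det Q).mp hQ), one_mulVec]
  rw [h, mulVec_single_one] at hv
  exact congrFun hv i

variable {R : Type*} [Field R] {c w : n → R} {k : n}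

theorem updateRow_diagonal_mulVec_single_self (hw : w k = 1) :
    (diagonal c).updateRow k w *ᵥ Pi.single k 1 = Pi.single k 1 := by
  ext i
  rcases eq_or_ne i k with rfl | hik
  · simp [hw]
  · simp [hik]

theorem updateRow_diagonal_mulVec_of_ne (hw : w k = 1) {j : n} (hjk : j ≠ k) (hc : c j ≠ 0) :
    (diagonal c).updateRow k w *ᵥ ((c j)⁻¹ • (Pi.single j 1 - w j • Pi.single k 1))
      = Pi.single j 1 := by
  ext i
  rcases eq_or_ne i k with rfl | hik
  · simp [updateRow_mulVec, hjk.symm, hw]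
  · rcases eq_or_ne i j with rfl | hij
    · simp [updateRow_mulVec, mulVec_diagonal, hik, hc]
    · simp [updateRow_mulVec, mulVec_diagonal, hik, hij]

end Matrix

theorem stmt6 (d : ℕ) (D : Matrix (Fin d) (Fin d) ℝ)
    (hDinv : IsUnit D)
    (hD : ∀ j, ∑ i, (D i j) ^ 2 = 1)
    (k : Fin d) (w : Fin d → ℝ) (hw : w k = 1)
    (M : Matrix (Fin d) (Fin d) ℝ) (hM : M = Dᵀ * D)
    (Q : Matrix (Fin d) (Fin d) ℝ)
    (hQ : Q = fun i j => if i = k then ∑ l, w l * D⁻¹ l j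
      else Real.sqrt ((w i - M k i) ^ 2 + 1 - (M k i) ^ 2) * D⁻¹ i j)
    (hQinv : IsUnit Q) :
    ∀ j, ∑ i, (Q⁻¹ i j) ^ 2 = 1 := by
  set c : Fin d → ℝ := fun i => Real.sqrt ((w i - M k i) ^ 2 + 1 - (M k i) ^ 2)
  have hQA : Q = (diagonal c).updateRow k w * D⁻¹ := by
    rw [hQ, updateRow_mul]
    ext i j
    rcases eq_or_ne i k with rfl | hik
    · simp [vecMul, dotProduct]
    · simp [hik, c]
  have hQD : Q * D = (diagonal c).updateRow k w := by
    rw [hQA, Matrix.mul_assoc, nonsing_inv_mul _ ((isUnit_iff_isUnit_det D).mp hDinv), mul_one]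
  have hQinv_apply {j : Fin d} {u : Fin d → ℝ}
      (hu : (diagonal c).updateRow k w *ᵥ u = Pi.single j 1) (i : Fin d) : Q⁻¹ i j = (D *ᵥ u) i :=
    inv_apply_eq_of_mulVec_eq_single hQinv (by rw [mulVec_mulVec, hQD, hu]) i
  intro j
  rcases eq_or_ne j k with rfl | hjk
  · simpa [hQinv_apply (updateRow_diagonal_mulVec_single_self hw)] using hD j
  have hc : c j ≠ 0 := by
    intro hc0
    refine ((isUnit_iff_isUnit_det Q).mp hQinv).ne_zero (det_eq_zero_of_row_eq_zero j fun l => ?_)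
    simp only [hQ, if_neg hjk]
    exact mul_eq_zero_of_left hc0 _
  have hsq : c j ^ 2 = ∑ i, (D i j - w j * D i k) ^ 2 := by
    have hS := sum_sq_col_sub_smul_col (hD j) (hD k) (w j)
    rw [← hM] at hS
    rw [Real.sq_sqrt (hS ▸ sum_nonneg fun i _ => sq_nonneg _), hS]
  have hentry (i : Fin d) : Q⁻¹ i j = (c j)⁻¹ * (D i j - w j * D i k) := by
    simp [hQinv_apply (updateRow_diagonal_mulVec_of_ne hw hjk hc), mulVec_smul, mulVec_sub]
  calc ∑ i, Q⁻¹ i j ^ 2 = ((c j)⁻¹) ^ 2 * ∑ i, (D i j - w j * D i k) ^ 2 := by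
        simp only [hentry, mul_pow, mul_sum]
    _ = 1 := by rw [← hsq]; field_simp
end

section
/- For the sparse Gaussian coefficient model SG(s) in dimension K, for every matrix X ∈ ℝ^{K×K} with zero diagonal, the quantity √(2/π) · Σ_{k=1}^K C(K,s)⁻¹ Σ_{S ⊆ {1,…,K}, k∉S, |S|=s} √(Σ_{j∈S} X_{k,j}²) is at least (s(K-s)/(K(K-1)))·√(2/π)·‖X‖_F, provided the lemma that C(K-2,l-1)⁻¹ Σ_{|S|=l, S⊆{1,…,K-1}} √(Σ_{j∈S} z_j²) is nonincreasing in l holds. -/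
open Matrix Finset

theorem Real.sqrt_add_le (x y : ℝ) : √(x + y) ≤ √x + √y := by
  rw [Real.sqrt_le_left (by positivity), add_sq, Real.sq_sqrt', Real.sq_sqrt']
  nlinarith [le_max_left x 0, le_max_left y 0, Real.sqrt_nonneg x, Real.sqrt_nonneg y]

theorem Real.sqrt_sum_le_sum_sqrt {ι : Type*} (t : Finset ι) (f : ι → ℝ) :
    √(∑ i ∈ t, f i) ≤ ∑ i ∈ t, √(f i) :=
  le_sum_of_subadditive Real.sqrt Real.sqrt_zero.le Real.sqrt_add_le t f

theorem frob_le_sum_sqrt_sum_sq_row {d : ℕ} (X : Matrix (Fin d) (Fin d) ℝ) :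
    frob X ≤ ∑ i, √(∑ j, X i j ^ 2) :=
  Real.sqrt_sum_le_sum_sqrt _ _

theorem Nat.choose_mul_add_two_mul_add_one (n k : ℕ) :
    n.choose k * ((n + 2) * (n + 1)) = (n + 2).choose (k + 1) * ((k + 1) * (n + 1 - k)) := by
  calc n.choose k * ((n + 2) * (n + 1)) = (n + 2) * (n.choose k * (n + 1)) := by ring
    _ = (n + 2) * (n + 1).choose k * (n + 1 - k) := by rw [Nat.choose_mul_succ_eq]; ring
    _ = _ := by rw [Nat.add_one_mul_choose_eq]; ring

theorem Nat.cast_choose_sub_two_div_choose {n s : ℕ} (hs : 1 ≤ s) (hsn : s < n) :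
    ((n - 2).choose (s - 1) : ℝ) / n.choose s = s * (n - s) / (n * (n - 1)) := by
  obtain ⟨m, rfl⟩ : ∃ m, n = m + 2 := ⟨n - 2, by omega⟩
  obtain ⟨t, rfl⟩ : ∃ t, s = t + 1 := ⟨s - 1, by omega⟩
  have key := congrArg (Nat.cast : ℕ → ℝ) (Nat.choose_mul_add_two_mul_add_one m t)
  push_cast [Nat.cast_sub (by omega : t ≤ m + 1)] at key
  have hc : (0 : ℝ) < (m + 2).choose (t + 1) := by exact_mod_cast Nat.choose_pos (by omega)
  simp only [Nat.add_sub_cancel]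
  push_cast
  rw [show (m : ℝ) + 2 - 1 = m + 1 by ring, div_eq_div_iff hc.ne' (by positivity)]
  linear_combination key

theorem choose_mul_sqrt_sum_sq_le_sum_powersetCard {K s : ℕ} (k : Fin K) {z : Fin K → ℝ}
    (hz : z k = 0)
    (h : ((K - 2).choose (s - 1) : ℝ)⁻¹ *
          ∑ S ∈ powersetCard s (univ.erase k), √(∑ j ∈ S, z j ^ 2) ≥
        ((K - 2).choose (K - 1 - 1) : ℝ)⁻¹ *
          ∑ S ∈ powersetCard (K - 1) (univ.erase k), √(∑ j ∈ S, z j ^ 2)) :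
    ((K - 2).choose (s - 1) : ℝ) * √(∑ j, z j ^ 2) ≤
      ∑ S ∈ powersetCard s (univ.erase k), √(∑ j ∈ S, z j ^ 2) := by
  have hcard : (univ.erase k).card = K - 1 := by simp
  rw [← hcard, powersetCard_self, sum_singleton, sum_erase _ (by simp [hz]),
    hcard, Nat.sub_sub, Nat.choose_self, Nat.cast_one, inv_one, one_mul] at h
  rcases (Nat.cast_nonneg ((K - 2).choose (s - 1)) : (0 : ℝ) ≤ _).eq_or_lt with h0 | hpos
  · rw [← h0, zero_mul]
    exact sum_nonneg fun _ _ => Real.sqrt_nonneg _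
  · rwa [ge_iff_le, inv_mul_eq_div, le_div_iff₀ hpos, mul_comm] at h

theorem stmt7_general (K s : ℕ) (hs : 1 ≤ s) (hsK : s ≤ K - 1)
    (X : Matrix (Fin K) (Fin K) ℝ) (hdiag : ∀ k, X k k = 0)
    -- Lemma 6.5 of Wu–Yu 2015 (combinatorial averaging lemma), assumed:
    (hlem : ∀ (k : Fin K) (z : Fin K → ℝ) (l m : ℕ), 1 ≤ l → l ≤ m → m ≤ K - 1 →
      ((K - 2).choose (l - 1) : ℝ)⁻¹ *
          ∑ S ∈ Finset.powersetCard l (Finset.univ.erase k),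
            Real.sqrt (∑ j ∈ S, (z j) ^ 2) ≥
        ((K - 2).choose (m - 1) : ℝ)⁻¹ *
          ∑ S ∈ Finset.powersetCard m (Finset.univ.erase k),
            Real.sqrt (∑ j ∈ S, (z j) ^ 2)) :
    Real.sqrt (2 / Real.pi) *
        ∑ k, (K.choose s : ℝ)⁻¹ *
          ∑ S ∈ Finset.powersetCard s (Finset.univ.erase k),
            Real.sqrt (∑ j ∈ S, (X k j) ^ 2) ≥
      ((s : ℝ) * (K - s) / (K * (K - 1))) * Real.sqrt (2 / Real.pi) * frob X := by
  have hrow k := choose_mul_sqrt_sum_sq_le_sum_powersetCard k (hdiag k)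
    (hlem k (X k) s (K - 1) hs hsK le_rfl)
  have hratio := Nat.cast_choose_sub_two_div_choose hs (show s < K by omega)
  have hcoef : (0 : ℝ) ≤ s * (K - s) / (K * (K - 1)) := hratio ▸ by positivity
  calc (s * (K - s) / (K * (K - 1)) : ℝ) * √(2 / Real.pi) * frob X
      ≤ (s * (K - s) / (K * (K - 1)) : ℝ) * √(2 / Real.pi) * ∑ k, √(∑ j, X k j ^ 2) := by
        gcongr
        exact frob_le_sum_sqrt_sum_sq_row X
    _ = √(2 / Real.pi) * ∑ k, (K.choose s : ℝ)⁻¹ *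
          (((K - 2).choose (s - 1) : ℝ) * √(∑ j, X k j ^ 2)) := by
        rw [← hratio]
        simp only [mul_sum]
        exact sum_congr rfl fun k _ => by ring
    _ ≤ _ := by
        gcongr with k
        exact hrow k

theorem stmt7 (K s : ℕ) (hK : 2 ≤ K) (hs : 1 ≤ s) (hsK : s ≤ K - 1)
    (X : Matrix (Fin K) (Fin K) ℝ) (hdiag : ∀ k, X k k = 0)
    -- Lemma 6.5 of Wu–Yu 2015 (combinatorial averaging lemma), assumed:
    (hlem : ∀ (k : Fin K) (z : Fin K → ℝ) (l m : ℕ), 1 ≤ l → l ≤ m → m ≤ K - 1 →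
      ((K - 2).choose (l - 1) : ℝ)⁻¹ *
          ∑ S ∈ Finset.powersetCard l (Finset.univ.erase k),
            Real.sqrt (∑ j ∈ S, (z j) ^ 2) ≥
        ((K - 2).choose (m - 1) : ℝ)⁻¹ *
          ∑ S ∈ Finset.powersetCard m (Finset.univ.erase k),
            Real.sqrt (∑ j ∈ S, (z j) ^ 2)) :
    Real.sqrt (2 / Real.pi) *
        ∑ k, (K.choose s : ℝ)⁻¹ *
          ∑ S ∈ Finset.powersetCard s (Finset.univ.erase k),
            Real.sqrt (∑ j ∈ S, (X k j) ^ 2) ≥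
      ((s : ℝ) * (K - s) / (K * (K - 1))) * Real.sqrt (2 / Real.pi) * frob X :=
  stmt7_general K s hs hsK X hdiag hlem
end

section
/- Let K ≥ 2 and 1 ≤ s ≤ K-1 be integers and c > 0. The minimum of Σ_{k=1}^K (s/K)·C(K-1,s-1)⁻¹ Σ_{S⊆{1,…,K}, k∉S, |S|=s} √(Σ_{j∈S} A_{k,j}²) over matrices A ∈ ℝ^{K×K} with zero diagonal subject to Σ_k Σ_{j≠k} A_{k,j} = K(K-1) equals (K-s)√s, attained at the matrix with all off-diagonal entries equal to 1. -/
/-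
Cauchy–Schwarz gives `∑_{j ∈ S} A k j ≤ √s · √(∑_{j ∈ S} (A k j)²)` for every `s`-subset `S` of
row `k`. Summing over all such `S` counts each off-diagonal entry `C(K-2, s-1)` times, so the
objective is at least a fixed multiple of the constrained total `∑ A k j = K (K-1)`; the
multiple works out to `(K-s)√s` because `(K-1) C(K-2, s-1) = (K-s) C(K-1, s-1)`. The all-ones
matrix makes every Cauchy–Schwarz step an equality.
-/

open Matrix Finset

/-- The objective functional in the symmetric minimization problem. -/
noncomputable def obj9 (K s : ℕ) (A : Matrix (Fin K) (Fin K) ℝ) : ℝ :=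
  ∑ k, ((s : ℝ) / K) * ((K - 1).choose (s - 1) : ℝ)⁻¹ *
    ∑ S ∈ Finset.powersetCard s (Finset.univ.erase k),
      Real.sqrt (∑ j ∈ S, (A k j) ^ 2)

namespace Finset

variable {α : Type*} [DecidableEq α]

lemma card_filter_mem_powersetCard {u : Finset α} {j : α} (hj : j ∈ u) {s : ℕ} (hs : 1 ≤ s) :
    #{S ∈ u.powersetCard s | j ∈ S} = (#u - 1).choose (s - 1) := by
  simpa only [singleton_subset_iff, card_singleton] using
    card_filter_powersetCard_subset {j} u s (singleton_subset_iff.2 hj) hs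

lemma sum_powersetCard_sum {M : Type*} [AddCommMonoid M] (u : Finset α) {s : ℕ} (hs : 1 ≤ s)
    (f : α → M) :
    ∑ S ∈ u.powersetCard s, ∑ j ∈ S, f j = (#u - 1).choose (s - 1) • ∑ j ∈ u, f j := by
  rw [sum_comm' (t' := u) (s' := fun j => {S ∈ u.powersetCard s | j ∈ S}), smul_sum]
  · refine sum_congr rfl fun j hj => ?_
    rw [sum_const, card_filter_mem_powersetCard hj hs]
  · intro S j
    simp only [mem_filter, mem_powersetCard]
    exact ⟨fun ⟨hS, hj⟩ => ⟨⟨hS, hj⟩, hS.1 hj⟩, fun ⟨hS, _⟩ => hS⟩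

end Finset

lemma Real.sum_le_sqrt_card_mul_sqrt_sum_sq {ι : Type*} (S : Finset ι) (f : ι → ℝ) :
    ∑ j ∈ S, f j ≤ √(#S : ℝ) * √(∑ j ∈ S, f j ^ 2) := by
  rw [← Real.sqrt_mul (Nat.cast_nonneg _)]
  exact Real.le_sqrt_of_sq_le sq_sum_le_card_mul_sum_sq

lemma choose_mul_sum_le_sqrt_mul_sum_powersetCard {ι : Type*} [DecidableEq ι] (u : Finset ι)
    {s : ℕ} (hs : 1 ≤ s) (a : ι → ℝ) :
    ((#u - 1).choose (s - 1) : ℝ) * ∑ j ∈ u, a j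
      ≤ √(s : ℝ) * ∑ S ∈ u.powersetCard s, √(∑ j ∈ S, a j ^ 2) := by
  rw [← nsmul_eq_mul, ← sum_powersetCard_sum u hs, mul_sum]
  refine sum_le_sum fun S hS => ?_
  rw [← (mem_powersetCard.1 hS).2]
  exact Real.sum_le_sqrt_card_mul_sqrt_sum_sq S (a ·)

lemma Fin.card_univ_erase {K : ℕ} (k : Fin K) : #(univ.erase k) = K - 1 := by
  rw [card_erase_of_mem (mem_univ k), card_univ, Fintype.card_fin]

lemma sum_offDiag_of_offDiag_eq_one {K : ℕ} {A : Matrix (Fin K) (Fin K) ℝ}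
    (hA : ∀ k j, k ≠ j → A k j = 1) :
    ∑ k, ∑ j ∈ univ.erase k, A k j = (K : ℝ) * (K - 1) := by
  have hrow (k : Fin K) : ∑ j ∈ univ.erase k, A k j = K - 1 := by
    rw [sum_congr rfl fun j hj => hA k j (ne_of_mem_erase hj).symm, sum_const,
      Fin.card_univ_erase, nsmul_one, Nat.cast_pred k.pos]
  rw [sum_congr rfl fun k _ => hrow k, sum_const, card_univ, Fintype.card_fin, nsmul_eq_mul]

lemma obj9_of_offDiag_eq_one {K s : ℕ} (hs : 1 ≤ s) (hsK : s ≤ K - 1)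
    {A : Matrix (Fin K) (Fin K) ℝ} (hA : ∀ k j, k ≠ j → A k j = 1) :
    obj9 K s A = (K - s) * √(s : ℝ) := by
  have hrow (k : Fin K) :
      ∀ S ∈ (univ.erase k).powersetCard s, √(∑ j ∈ S, A k j ^ 2) = √(s : ℝ) := by
    intro S hS
    rw [mem_powersetCard] at hS
    rw [sum_congr rfl fun j hj => by rw [hA k j (ne_of_mem_erase (hS.1 hj)).symm, one_pow],
      sum_const, hS.2, nsmul_one]
  have hchoose : ((K - 1).choose s : ℝ) * s = (K - s) * (K - 1).choose (s - 1) := by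
    have h := Nat.choose_succ_right_eq (K - 1) (s - 1)
    rw [Nat.sub_add_cancel hs, Nat.sub_sub_sub_cancel_right hs] at h
    rw [← Nat.cast_sub (by omega : s ≤ K)]
    exact_mod_cast h.trans (mul_comm _ _)
  have hK : (0 : ℝ) < K := by norm_cast; omega
  have hC : (0 : ℝ) < (K - 1).choose (s - 1) := by norm_cast; exact Nat.choose_pos (by omega)
  simp only [obj9, sum_congr rfl (hrow _), sum_const, card_powersetCard, Fin.card_univ_erase,
    card_univ, Fintype.card_fin, nsmul_eq_mul]
  field_simp
  linear_combination hchoose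

lemma sub_mul_sqrt_le_obj9 {K s : ℕ} (hs : 1 ≤ s) (hsK : s ≤ K - 1)
    {A : Matrix (Fin K) (Fin K) ℝ}
    (hA : ∑ k, ∑ j ∈ univ.erase k, A k j = (K : ℝ) * (K - 1)) :
    (K - s) * √(s : ℝ) ≤ obj9 K s A := by
  set T : Fin K → ℝ := fun k => ∑ S ∈ (univ.erase k).powersetCard s, √(∑ j ∈ S, A k j ^ 2)
  have hrows : ((K - 2).choose (s - 1) : ℝ) * (K * (K - 1)) ≤ √(s : ℝ) * ∑ k, T k := by
    rw [← hA, mul_sum, mul_sum]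
    refine sum_le_sum fun k _ => ?_
    have h := choose_mul_sum_le_sqrt_mul_sum_powersetCard (univ.erase k) hs (A k)
    rwa [Fin.card_univ_erase, Nat.sub_sub] at h
  have hchoose : ((K : ℝ) - 1) * (K - 2).choose (s - 1) = (K - s) * (K - 1).choose (s - 1) := by
    have h := Nat.choose_mul_succ_eq (K - 2) (s - 1)
    rw [show K - 2 + 1 = K - 1 by omega, show K - 1 - (s - 1) = K - s by omega] at h
    rw [← Nat.cast_pred (by omega), ← Nat.cast_sub (by omega : s ≤ K)]
    exact_mod_cast (mul_comm _ _).trans (h.trans (mul_comm _ _))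
  have hK : (0 : ℝ) < K := by norm_cast; omega
  have hC : (0 : ℝ) < (K - 1).choose (s - 1) := by norm_cast; exact Nat.choose_pos (by omega)
  have hs' : (0 : ℝ) < √(s : ℝ) := Real.sqrt_pos.2 (by norm_cast)
  have hobj : obj9 K s A = s / K * ((K - 1).choose (s - 1) : ℝ)⁻¹ * ∑ k, T k := by
    rw [obj9, mul_sum]
  have hsq : √(s : ℝ) * √(s : ℝ) = s := Real.mul_self_sqrt (Nat.cast_nonneg s)
  calc (K - s) * √(s : ℝ)
      = s / K * ((K - 1).choose (s - 1) : ℝ)⁻¹ *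
          (((K - 2).choose (s - 1) : ℝ) * (K * (K - 1)) / √(s : ℝ)) := by
        field_simp
        linear_combination ((K : ℝ) - s) * (K - 1).choose (s - 1) * hsq - s * hchoose
    _ ≤ obj9 K s A := by
        rw [hobj]
        gcongr
        exact div_le_of_le_mul₀ hs'.le (by positivity) (by linarith)

theorem stmt9_general (K s : ℕ) (hs : 1 ≤ s) (hsK : s ≤ K - 1) :
    IsLeast {x : ℝ | ∃ A : Matrix (Fin K) (Fin K) ℝ,
        (∀ k, A k k = 0) ∧
        (∑ k, ∑ j ∈ Finset.univ.erase k, A k j) = (K : ℝ) * (K - 1) ∧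
        x = obj9 K s A}
      (((K : ℝ) - s) * Real.sqrt s) ∧
    obj9 K s (fun k j => if k = j then 0 else 1) = ((K : ℝ) - s) * Real.sqrt s := by
  have hones : ∀ k j : Fin K, k ≠ j → (if k = j then (0 : ℝ) else 1) = 1 :=
    fun _ _ h => if_neg h
  have hvalue := obj9_of_offDiag_eq_one hs hsK hones
  refine ⟨⟨⟨_, fun _ => if_pos rfl, sum_offDiag_of_offDiag_eq_one hones, hvalue.symm⟩, ?_⟩,
    hvalue⟩
  rintro x ⟨A, -, hA, rfl⟩
  exact sub_mul_sqrt_le_obj9 hs hsK hA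

theorem stmt9 (K s : ℕ) (hK : 2 ≤ K) (hs : 1 ≤ s) (hsK : s ≤ K - 1) :
    IsLeast {x : ℝ | ∃ A : Matrix (Fin K) (Fin K) ℝ,
        (∀ k, A k k = 0) ∧
        (∑ k, ∑ j ∈ Finset.univ.erase k, A k j) = (K : ℝ) * (K - 1) ∧
        x = obj9 K s A}
      (((K : ℝ) - s) * Real.sqrt s) ∧
    obj9 K s (fun k j => if k = j then 0 else 1) = ((K : ℝ) - s) * Real.sqrt s :=
  stmt9_general K s hs hsK
end

section
/- Consider the family of indicator functions F = { f_c : ℝ^K → {0,1} | c ∈ ℝ^K } where f_c(α) = 1 if Σ_j c_j α_j = 0 and Σ_j (c_j α_j)² > 0, and f_c(α) = 0 otherwise. Then F cannot shatter any set of 2K points in ℝ^K; that is, the VC dimension of F is at most 2K. -/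
/-!
If some `c` labels all `2K` points with `1`, they lie in the hyperplane `c ⬝ᵥ x = 0`, so a set `S`
of fewer than `K` of them spans all of them. Among the remaining `K + 1` points, by pigeonhole on
the `K` coordinates, the support of some `α i₀` is covered by the supports of the others. Labelling
`S ∪ {i₀}` with `1` is then impossible: a witness `c` vanishes on the span of `S`, hence on every
point, and a coordinate `j` with `c j * α i₀ j ≠ 0` is shared with some other point outside `S`,
which is then labelled `1` as well.
-/

open Finset

/-- The indicator classifier f_c from the family F. -/
def fc {K : ℕ} (c α : Fin K → ℝ) : Prop :=
  (∑ j, c j * α j = 0) ∧ 0 < ∑ j, (c j * α j) ^ 2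

open Matrix Module Submodule Set

theorem fc_iff {K : ℕ} {c x : Fin K → ℝ} : fc c x ↔ c ⬝ᵥ x = 0 ∧ ∃ j, c j * x j ≠ 0 := by
  have hsq : 0 < ∑ j, (c j * x j) ^ 2 ↔ ∃ j, c j * x j ≠ 0 := by
    rw [(sum_nonneg fun j _ => sq_nonneg _).lt_iff_ne', Ne,
      sum_eq_zero_iff_of_nonneg fun j _ => sq_nonneg _]
    simp
  exact and_congr Iff.rfl hsq

theorem dotProduct_eq_zero_of_mem_span {R n : Type*} [CommSemiring R] [Fintype n]
    {c x : n → R} {s : Set (n → R)} (hs : ∀ y ∈ s, c ⬝ᵥ y = 0) (hx : x ∈ span R s) :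
    c ⬝ᵥ x = 0 := by
  induction hx using Submodule.span_induction with
  | mem y hy => exact hs y hy
  | zero => exact dotProduct_zero c
  | add y z _ _ hy hz => rw [dotProduct_add, hy, hz, add_zero]
  | smul a y _ hy => rw [dotProduct_smul, hy, smul_zero]

theorem finrank_span_lt_of_forall_fc {ι : Type*} {K : ℕ} {c : Fin K → ℝ} {α : ι → Fin K → ℝ}
    (hα : ∀ i, fc c (α i)) (i₀ : ι) : finrank ℝ (span ℝ (range α)) < K := by
  obtain ⟨j, hj⟩ := (fc_iff.1 (hα i₀)).2
  have hc : c ≠ 0 := fun h => hj (by simp [h])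
  have hspan : span ℝ (range α) ≠ ⊤ := fun htop => hc <| dotProduct_self_eq_zero.1 <|
    dotProduct_eq_zero_of_mem_span (by rintro _ ⟨i, rfl⟩; exact (fc_iff.1 (hα i)).1)
      (htop ▸ mem_top)
  simpa using Submodule.finrank_lt hspan

theorem exists_finset_card_le_finrank_span (R : Type*) {ι V : Type*} [DivisionRing R]
    [AddCommGroup V] [Module R V] [FiniteDimensional R V] (α : ι → V) :
    ∃ S : Finset ι, S.card ≤ finrank R (span R (range α)) ∧ ∀ i, α i ∈ span R (α '' S) := by
  classical
  obtain ⟨f, hf_mem, hf_span, -⟩ := exists_fun_fin_finrank_span_eq R (range α)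
  choose idx hidx using hf_mem
  refine ⟨univ.image idx, card_image_le.trans (by simp), fun i => ?_⟩
  have hle : span R (range f) ≤ span R (α '' (univ.image idx : Finset ι)) :=
    span_mono <| by rintro _ ⟨k, rfl⟩; exact ⟨idx k, by simp, hidx k⟩
  exact hle (by rw [hf_span]; exact subset_span (mem_range_self i))

theorem exists_support_subset_iUnion_erase {ι J M : Type*} [DecidableEq ι] [Fintype J] [Zero M]
    (v : ι → J → M) (T : Finset ι) (hT : Fintype.card J < T.card) :
    ∃ i ∈ T, Function.support (v i) ⊆ ⋃ i' ∈ T.erase i, Function.support (v i') := by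
  by_contra! h
  choose g hg_supp hg_not using fun i hi => Set.not_subset.1 (h i hi)
  obtain ⟨⟨i, hi⟩, ⟨i', hi'⟩, hne, hgg⟩ :=
    Fintype.exists_ne_map_eq_of_card_lt (fun i : T => g i i.2) (by simpa using hT)
  refine hg_not i' hi' (mem_iUnion₂.2 ⟨i, mem_erase.2 ⟨fun h => hne (Subtype.ext h), hi⟩, ?_⟩)
  exact hgg ▸ hg_supp i hi

theorem exists_fc_of_support_subset_iUnion {ι : Type*} {K : ℕ} {c x₀ : Fin K → ℝ}
    {v : ι → Fin K → ℝ} {s : Set ι} (h₀ : fc c x₀) (hv : ∀ i ∈ s, c ⬝ᵥ v i = 0)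
    (hsupp : Function.support x₀ ⊆ ⋃ i ∈ s, Function.support (v i)) : ∃ i ∈ s, fc c (v i) := by
  obtain ⟨j, hj⟩ := (fc_iff.1 h₀).2
  obtain ⟨i, hi, hij⟩ := mem_iUnion₂.1 (hsupp (right_ne_zero_of_mul hj))
  exact ⟨i, hi, fc_iff.2 ⟨hv i hi, j, mul_ne_zero (left_ne_zero_of_mul hj) hij⟩⟩

theorem stmt13 (K : ℕ) (hK : 1 ≤ K) (α : Fin (2 * K) → (Fin K → ℝ)) :
    ¬ (∀ b : Fin (2 * K) → Bool, ∃ c : Fin K → ℝ,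
        ∀ i, fc c (α i) ↔ b i = true) := by
  intro hshatter
  obtain ⟨c₀, hc₀⟩ := hshatter fun _ => true
  have hrank := finrank_span_lt_of_forall_fc (fun i => (hc₀ i).2 rfl) ⟨0, by omega⟩
  obtain ⟨S, hS_card, hS_span⟩ := exists_finset_card_le_finrank_span ℝ α
  obtain ⟨i₀, -, hsupp⟩ := exists_support_subset_iUnion_erase α Sᶜ (by
    rw [card_compl, Fintype.card_fin, Fintype.card_fin]; omega)
  obtain ⟨c, hc⟩ := hshatter fun i => decide (i ∈ insert i₀ S)
  have hS : ∀ i ∈ S, c ⬝ᵥ α i = 0 := fun i hi => (fc_iff.1 ((hc i).2 (by simp [hi]))).1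
  obtain ⟨i, hi, hfc⟩ := exists_fc_of_support_subset_iUnion ((hc i₀).2 (by simp))
    (fun i _ => dotProduct_eq_zero_of_mem_span (by simpa using hS) (hS_span i)) hsupp
  simp only [mem_coe, mem_erase, Finset.mem_compl] at hi
  simpa [hi.1, hi.2] using (hc i).1 hfc
end
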